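/- arXiv:2603.13559 — 3 statements merged into one kernel-verified Lean document; each statement's English description precedes it below -/
import Mathlib

section
/- With M = L Q^T, Q^T Q = I_n, and dL_col = L (tril(K + K^T) − diag(K)) where K = L^† dM Q, the identity dL_col L^T + L dL_col^T = P dM M^T + M dM^T P holds, where P = LL^†. -/
open Matrix

/-- `tril A`: the lower-triangular part (including the diagonal) of `A`. -/
def tril {n : ℕ} (A : Matrix (Fin n) (Fin n) ℝ) : Matrix (Fin n) (Fin n) ℝ :=
  Matrix.of fun i j => if j ≤ i then A i j else 0

lemma tril_add_tril_transpose {n : ℕ} (S : Matrix (Fin n) (Fin n) ℝ) (hS : Sᵀ = S) :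
    tril S + (tril S)ᵀ = S + Matrix.diagonal S.diag := by
  ext i j
  have hsym : S j i = S i j := by
    have := congrFun (congrFun hS i) j; simpa [Matrix.transpose_apply] using this
  simp only [Matrix.add_apply, tril, Matrix.of_apply, Matrix.transpose_apply,
    Matrix.diagonal_apply, Matrix.diag]
  rcases lt_trichotomy i j with h | h | h
  · simp [h.not_ge, h.le, h.ne, hsym]
  · subst h; simp
  · simp [h.not_ge, h.le, h.ne', hsym]

/-- The column-space tangent `dL_col = L (tril (K + Kᵀ) - diag K)` satisfies
`dL_col Lᵀ + L dL_colᵀ = P dM Mᵀ + M dMᵀ P` where `P = L L†`. -/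
theorem dLcol_identity {n m : ℕ}
    (L Ld : Matrix (Fin n) (Fin n) ℝ) (Q : Matrix (Fin m) (Fin n) ℝ)
    (dM : Matrix (Fin n) (Fin m) ℝ)
    (h1 : L * Ld * L = L) (h2 : Ld * L * Ld = Ld)
    (h3 : (L * Ld)ᵀ = L * Ld) (h4 : (Ld * L)ᵀ = Ld * L)
    (hQ : Qᵀ * Q = 1)
    (M : Matrix (Fin n) (Fin m) ℝ) (hM : M = L * Qᵀ)
    (P : Matrix (Fin n) (Fin n) ℝ) (hP : P = L * Ld)
    (K : Matrix (Fin n) (Fin n) ℝ) (hK : K = Ld * dM * Q)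
    (dLcol : Matrix (Fin n) (Fin n) ℝ)
    (hcol : dLcol = L * (tril (K + Kᵀ) - Matrix.diagonal K.diag)) :
    dLcol * Lᵀ + L * dLcolᵀ = P * dM * Mᵀ + M * dMᵀ * P := by
  set S := K + Kᵀ with hS
  have hSsym : Sᵀ = S := by simp [hS, add_comm]
  have hDD : Matrix.diagonal S.diag = Matrix.diagonal K.diag + Matrix.diagonal K.diag := by
    ext i j
    by_cases h : i = j <;> simp [Matrix.diagonal_apply, h, hS, Matrix.diag]
  have key : (tril S - Matrix.diagonal K.diag) + (tril S - Matrix.diagonal K.diag)ᵀ = S := by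
    have h := tril_add_tril_transpose S hSsym
    rw [hDD] at h
    rw [Matrix.transpose_sub, Matrix.diagonal_transpose,
      show tril S - Matrix.diagonal K.diag + ((tril S)ᵀ - Matrix.diagonal K.diag)
        = tril S + (tril S)ᵀ - (Matrix.diagonal K.diag + Matrix.diagonal K.diag) from by abel,
      h]
    abel
  have lhs : dLcol * Lᵀ + L * dLcolᵀ = L * S * Lᵀ := by
    rw [hcol, Matrix.transpose_mul,
      show L * (tril S - Matrix.diagonal K.diag) * Lᵀ
          + L * ((tril S - Matrix.diagonal K.diag)ᵀ * Lᵀ)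
        = L * ((tril S - Matrix.diagonal K.diag)
          + (tril S - Matrix.diagonal K.diag)ᵀ) * Lᵀ from by noncomm_ring,
      key]
  rw [lhs]
  have hSexp : S = Ld * dM * Q + Qᵀ * dMᵀ * Ldᵀ := by
    rw [hS, hK]; simp [Matrix.transpose_mul, Matrix.mul_assoc]
  have e1 : L * (Ld * dM * Q) * Lᵀ = (L * Ld) * dM * (L * Qᵀ)ᵀ := by
    simp only [Matrix.transpose_mul, Matrix.transpose_transpose]; simp only [Matrix.mul_assoc]
  have e2 : L * (Qᵀ * dMᵀ * Ldᵀ) * Lᵀ = (L * Qᵀ) * dMᵀ * (L * Ld) := by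
    rw [← h3]; simp only [Matrix.transpose_mul, Matrix.transpose_transpose]; simp only [Matrix.mul_assoc]
  rw [hSexp, hP, hM, Matrix.mul_add, Matrix.add_mul, e1, e2]
end

section
/- Let M = L Q^T with Q^T Q = I_n, K = L^† dM Q, dL_col = L (tril(K+K^T) − diag(K)), dL_null = (I − LL^†) dM Q, and dL = dL_col + dL_null. Then dL satisfies the Gramian differential identity dL L^T + L dL^T = dM M^T + M dM^T. -/
open Matrix

lemma tril_sym_add {n : ℕ} (K : Matrix (Fin n) (Fin n) ℝ) :
    (tril (K + Kᵀ) - Matrix.diagonal K.diag) +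
      (tril (K + Kᵀ) - Matrix.diagonal K.diag)ᵀ = K + Kᵀ := by
  ext i j
  simp only [tril, Matrix.add_apply, Matrix.sub_apply, Matrix.transpose_apply,
    Matrix.diagonal_apply, Matrix.of_apply, Matrix.diag]
  rcases lt_trichotomy i j with h | h | h
  · simp [h.le, not_le.mpr h, h.ne, h.ne']
    try ring
  · subst h
    simp
    try ring
  · simp [h.le, not_le.mpr h, h.ne, h.ne']
    try ring

/-- The surrogate tangent `dL = dL_col + dL_null` satisfies the Gramian
differential identity `dL Lᵀ + L dLᵀ = dM Mᵀ + M dMᵀ`. -/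
theorem surrogate_gramian_identity {n m : ℕ}
    (L Ld : Matrix (Fin n) (Fin n) ℝ) (Q : Matrix (Fin m) (Fin n) ℝ)
    (dM : Matrix (Fin n) (Fin m) ℝ)
    (h1 : L * Ld * L = L) (h2 : Ld * L * Ld = Ld)
    (h3 : (L * Ld)ᵀ = L * Ld) (h4 : (Ld * L)ᵀ = Ld * L)
    (hQ : Qᵀ * Q = 1)
    (M : Matrix (Fin n) (Fin m) ℝ) (hM : M = L * Qᵀ)
    (K : Matrix (Fin n) (Fin n) ℝ) (hK : K = Ld * dM * Q)
    (dLcol dLnull dL : Matrix (Fin n) (Fin n) ℝ)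
    (hcol : dLcol = L * (tril (K + Kᵀ) - Matrix.diagonal K.diag))
    (hnull : dLnull = (1 - L * Ld) * dM * Q)
    (hdL : dL = dLcol + dLnull) :
    dL * Lᵀ + L * dLᵀ = dM * Mᵀ + M * dMᵀ := by
  set X := tril (K + Kᵀ) - Matrix.diagonal K.diag with hX
  have htril : X + Xᵀ = K + Kᵀ := tril_sym_add K
  have hP : Ldᵀ * Lᵀ = L * Ld := by rw [← Matrix.transpose_mul, h3]
  have hcol2 : dLcol * Lᵀ + L * dLcolᵀ
      = L * (Ld * (dM * (Q * Lᵀ))) + L * (Qᵀ * (dMᵀ * (L * Ld))) := by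
    have e1 : dLcol * Lᵀ + L * dLcolᵀ = L * ((X + Xᵀ) * Lᵀ) := by
      rw [hcol]
      simp only [Matrix.transpose_mul, Matrix.add_mul, Matrix.mul_add,
        Matrix.mul_assoc]
    rw [e1, htril, hK]
    simp only [Matrix.transpose_mul, Matrix.add_mul, Matrix.mul_add,
      Matrix.mul_assoc, hP]
  have hnull2 : dLnull * Lᵀ + L * dLnullᵀ
      = dM * (Q * Lᵀ) - L * (Ld * (dM * (Q * Lᵀ)))
        + (L * (Qᵀ * dMᵀ) - L * (Qᵀ * (dMᵀ * (L * Ld)))) := by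
    rw [hnull]
    simp only [Matrix.transpose_mul, Matrix.transpose_sub, Matrix.transpose_one,
      Matrix.sub_mul, Matrix.mul_sub, Matrix.one_mul, Matrix.mul_one,
      Matrix.mul_assoc, hP]
  rw [hdL, hM, Matrix.transpose_add, Matrix.transpose_mul,
    Matrix.transpose_transpose]
  rw [show (dLcol + dLnull) * Lᵀ + L * (dLcolᵀ + dLnullᵀ)
      = (dLcol * Lᵀ + L * dLcolᵀ) + (dLnull * Lᵀ + L * dLnullᵀ) by
    simp only [Matrix.add_mul, Matrix.mul_add]; abel]
  rw [hcol2, hnull2]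
  simp only [Matrix.mul_assoc]
  abel
end

section
/- In the setting of the block triangularization of the update step, if additionally L11 is invertible and K = L21 L11^{-1}, then L22 L22^T = P − K (B P B^T + V) K^T, i.e. the bottom-right factor recovers the Kalman posterior covariance P − K P_ν K^T. -/
open Matrix

/-- If additionally `L11` is invertible and `K = L21 L11⁻¹`, the bottom-right
factor recovers the Kalman posterior covariance:
`L22 L22ᵀ = P - K (B P Bᵀ + V) Kᵀ`. -/
theorem update_posterior_covariance {dx dy : ℕ}
    (S : Matrix (Fin dx) (Fin dx) ℝ) (B : Matrix (Fin dy) (Fin dx) ℝ)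
    (Vsq : Matrix (Fin dy) (Fin dy) ℝ)
    (P : Matrix (Fin dx) (Fin dx) ℝ) (V : Matrix (Fin dy) (Fin dy) ℝ)
    (hP : P = S * Sᵀ) (hV : V = Vsq * Vsqᵀ)
    (L11 : Matrix (Fin dy) (Fin dy) ℝ) (L21 : Matrix (Fin dx) (Fin dy) ℝ)
    (L22 : Matrix (Fin dx) (Fin dx) ℝ)
    (Mupd : Matrix (Fin dy ⊕ Fin dx) (Fin dx ⊕ Fin dy) ℝ)
    (L : Matrix (Fin dy ⊕ Fin dx) (Fin dy ⊕ Fin dx) ℝ)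
    (hM : Mupd = Matrix.fromBlocks (B * S) Vsq S 0)
    (hL : L = Matrix.fromBlocks L11 0 L21 L22)
    (hGram : L * Lᵀ = Mupd * Mupdᵀ)
    (hInv : IsUnit L11)
    (K : Matrix (Fin dx) (Fin dy) ℝ) (hK : K = L21 * L11⁻¹) :
    L22 * L22ᵀ = P - K * (B * P * Bᵀ + V) * Kᵀ := by
  subst hM hL hP hV hK
  rw [Matrix.fromBlocks_transpose, Matrix.fromBlocks_transpose,
    Matrix.fromBlocks_multiply, Matrix.fromBlocks_multiply] at hGram
  simp only [Matrix.mul_zero, Matrix.zero_mul, add_zero, zero_add,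
    Matrix.transpose_zero, Matrix.transpose_mul] at hGram
  rw [Matrix.fromBlocks_inj] at hGram
  obtain ⟨h11, h12, h21, h22⟩ := hGram
  have hdet : IsUnit L11.det := (Matrix.isUnit_iff_isUnit_det L11).mp hInv
  have hdetT : IsUnit L11ᵀ.det := by rwa [Matrix.det_transpose]
  have hinv1 : L11⁻¹ * L11 = 1 := Matrix.nonsing_inv_mul L11 hdet
  have hinv2 : L11ᵀ * (L11⁻¹)ᵀ = 1 := by
    rw [Matrix.transpose_nonsing_inv]
    exact Matrix.mul_nonsing_inv _ hdetT
  have key : L21 * L11⁻¹ * (B * (S * Sᵀ) * Bᵀ + Vsq * Vsqᵀ) * (L21 * L11⁻¹)ᵀ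
      = L21 * L21ᵀ := by
    have h11' : B * (S * Sᵀ) * Bᵀ + Vsq * Vsqᵀ = L11 * L11ᵀ := by
      rw [h11]; simp [Matrix.mul_assoc]
    rw [h11', Matrix.transpose_mul]
    have e1 : L11ᵀ * ((L11⁻¹)ᵀ * L21ᵀ) = L21ᵀ := by
      rw [← Matrix.mul_assoc, hinv2, Matrix.one_mul]
    have e2 : L11⁻¹ * (L11 * L21ᵀ) = L21ᵀ := by
      rw [← Matrix.mul_assoc, hinv1, Matrix.one_mul]
    simp only [Matrix.mul_assoc, e1, e2]
  rw [key]
  exact eq_sub_of_add_eq' h22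
end
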